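/- If G is a connected word-representable simple graph on a finite nonempty vertex set V, then there exists a square-free word that represents G. -/

import Mathlib

variable {V : Type*} [DecidableEq V]

/-- Distinct letters `x` and `y` alternate in `w`: deleting all other letters
leaves no two equal consecutive letters. -/
def Alternates (x y : V) (w : List V) : Prop :=
  (w.filter fun z => decide (z = x ∨ z = y)).Chain' (· ≠ ·)

/-- `w` represents the graph `G`: every vertex occurs in `w`, and distinct
vertices alternate in `w` iff they are adjacent in `G`. -/
def Represents (G : SimpleGraph V) (w : List V) : Prop :=
  (∀ v : V, v ∈ w) ∧ ∀ x y : V, x ≠ y → (Alternates x y w ↔ G.Adj x y)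

/-- `w` contains a square. -/
def HasSquare (w : List V) : Prop :=
  ∃ u X v : List V, X ≠ [] ∧ w = u ++ X ++ X ++ v

/-- `w` is square-free. -/
def SqFree (w : List V) : Prop := ¬ HasSquare w

namespace SqfAux

variable {α : Type*} [DecidableEq α]

/-- keep first occurrences -/
def dedupFirst : List α → List α
  | [] => []
  | a :: l => a :: dedupFirst (l.filter (fun b => decide (b ≠ a)))
termination_by l => l.length
decreasing_by simpa using Nat.lt_succ_of_le ((List.length_filter_le _ _).trans_eq List.length_attach)

theorem dedupFirst.induct' (motive : List α → Prop) (case1 : motive [])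
    (case2 : ∀ (a : α) (l : List α), motive (l.filter (fun b => decide (b ≠ a))) → motive (a :: l))
    (l : List α) : motive l := by
  induction l using dedupFirst.induct with
  | case1 => exact case1
  | case2 a l ih =>
    apply case2
    rwa [List.unattach_filter (g := fun b => decide (b ≠ a)) (hf := fun _ _ => rfl),
      List.unattach_attach] at ih

theorem mem_dedupFirst (l : List α) (x : α) : x ∈ dedupFirst l ↔ x ∈ l := by
  induction l using dedupFirst.induct' with
  | case1 => simp [dedupFirst]
  | case2 a l ih =>
    rw [dedupFirst]
    simp only [List.mem_cons, ih, List.mem_filter, decide_eq_true_eq]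
    constructor
    · rintro (rfl | ⟨h, _⟩)
      · left; rfl
      · right; exact h
    · rintro (rfl | h)
      · left; rfl
      · by_cases hx : x = a
        · left; exact hx
        · right; exact ⟨h, hx⟩

theorem nodup_dedupFirst (l : List α) : (dedupFirst l).Nodup := by
  induction l using dedupFirst.induct' with
  | case1 => simp [dedupFirst]
  | case2 a l ih =>
    rw [dedupFirst]
    refine List.nodup_cons.2 ⟨fun h => ?_, ih⟩
    rw [mem_dedupFirst] at h
    simp at h

theorem sublist_dedupFirst (l : List α) : List.Sublist (dedupFirst l) l := by
  induction l using dedupFirst.induct' with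
  | case1 => simp [dedupFirst]
  | case2 a l ih =>
    rw [dedupFirst]
    exact (ih.trans List.filter_sublist).cons₂ a

theorem head?_dedupFirst (l : List α) : (dedupFirst l).head? = l.head? := by
  cases l with
  | nil => rw [dedupFirst]
  | cons a l => rw [dedupFirst]; rfl

theorem filter_dedupFirst (q : α → Bool) (l : List α) :
    (dedupFirst l).filter q = dedupFirst (l.filter q) := by
  induction l using dedupFirst.induct' with
  | case1 => simp [dedupFirst]
  | case2 a l ih =>
    rw [dedupFirst, List.filter_cons]
    by_cases hq : q a
    · rw [if_pos hq, List.filter_cons, if_pos hq, dedupFirst]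
      rw [List.filter_filter] at ih ⊢
      rw [ih]
      congr 1
      apply congrArg dedupFirst
      apply List.filter_congr
      intro x _
      rw [Bool.and_comm]
    · rw [if_neg (by simp [hq]), List.filter_cons, if_neg (by simp [hq]), ih,
        List.filter_filter]
      congr 1
      apply List.filter_congr
      intro x hx
      by_cases hxa : x = a
      · subst hxa
        have : q x = false := by simpa using hq
        simp [this]
      · simp [hxa]

theorem length_dedupFirst_lt (l : List α) (h : ¬ l.Nodup) :
    (dedupFirst l).length < l.length := by
  rcases Nat.lt_or_ge (dedupFirst l).length l.length with h' | h'
  · exact h'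
  · exfalso
    have := (sublist_dedupFirst l).eq_of_length
      (le_antisymm ((sublist_dedupFirst l).length_le) h')
    rw [← this] at h
    exact h (nodup_dedupFirst l)

theorem dedupFirst_eq_self (l : List α) : l.Nodup → dedupFirst l = l := by
  induction l using dedupFirst.induct' with
  | case1 => intro _; rw [dedupFirst]
  | case2 a l ih =>
    intro h
    rw [List.nodup_cons] at h
    have hf : l.filter (fun b => decide (b ≠ a)) = l := by
      apply List.filter_eq_self.2
      intro x hx
      simp only [decide_eq_true_eq]
      rintro rfl
      exact h.1 hx
    rw [dedupFirst, hf]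
    rw [hf] at ih
    rw [ih h.2]



namespace Chains

variable {α : Type*}

theorem getLast?_mem' {l : List α} {a : α} (h : l.getLast? = some a) : a ∈ l := by
  cases l with
  | nil => simp at h
  | cons b t =>
    rw [List.getLast?_eq_getLast (l := b :: t) (by simp)] at h
    cases h
    exact List.getLast_mem _

theorem head?_append_of_ne_nil {l l' : List α} {a : α} (h : l.head? = some a) :
    (l ++ l').head? = some a := by
  rw [List.head?_append, h]; rfl

theorem chain_sq_iff (s t F : List α) (a b : α) (hab : a ≠ b)
    (hmem : ∀ z ∈ F, z = a ∨ z = b) (hhead : F.head? = some a) :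
    (s ++ (F ++ (F ++ t))).Chain' (· ≠ ·) ↔ (s ++ (F ++ ([a, b] ++ t))).Chain' (· ≠ ·) := by
  have hF : F ≠ [] := by rintro rfl; simp at hhead
  obtain ⟨c, hc⟩ : ∃ c, F.getLast? = some c :=
    ⟨F.getLast hF, List.getLast?_eq_getLast (l := F) hF⟩
  have hcab : c = a ∨ c = b := hmem c (getLast?_mem' hc)
  have h1 : ∀ t' : List α, (F ++ t').head? = some a := fun t' => head?_append_of_ne_nil hhead
  simp only [List.Chain', List.isChain_append, List.cons_append, List.nil_append, h1, hc, hhead,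
    List.head?_cons, List.getLast?_cons_cons, List.getLast?_singleton, Option.mem_def,
    Option.some.injEq, forall_eq', List.isChain_cons_cons, List.isChain_cons, List.isChain_singleton, and_true]
  have hba := hab.symm
  rcases hcab with rfl | rfl
  · constructor <;> intro h <;> tauto
  · constructor <;> intro h <;> tauto

theorem chain_pair_sq (s t : List α) (a b : α) :
    (s ++ ([a, b] ++ ([a, b] ++ t))).Chain' (· ≠ ·) ↔ (s ++ ([a, b] ++ t)).Chain' (· ≠ ·) := by
  by_cases hab : a = b
  · subst hab
    simp only [List.Chain', List.isChain_append, List.cons_append, List.nil_append, List.head?_cons,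
      List.getLast?_cons_cons, List.getLast?_singleton, Option.mem_def, Option.some.injEq,
      forall_eq', List.isChain_cons_cons, List.isChain_cons, List.isChain_singleton, and_true]
    constructor <;> intro h <;> tauto
  · have hba : b ≠ a := Ne.symm hab
    simp only [List.Chain', List.isChain_append, List.cons_append, List.nil_append, List.head?_cons,
      List.getLast?_cons_cons, List.getLast?_singleton, Option.mem_def, Option.some.injEq,
      forall_eq', List.isChain_cons_cons, List.isChain_cons, List.isChain_singleton, and_true]
    constructor <;> intro h <;> tauto

end Chains

theorem all_eq_singleton {α : Type*} {Q : List α} {c : α} (hnd : Q.Nodup)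
    (h : ∀ z ∈ Q, z = c) : Q = [] ∨ Q = [c] := by
  cases Q with
  | nil => exact Or.inl rfl
  | cons b R =>
    obtain rfl : b = c := h b (List.mem_cons_self)
    right
    rw [List.nodup_cons] at hnd
    have : R = [] := by
      rw [List.eq_nil_iff_forall_not_mem]
      intro d hd
      exact hnd.1 ((h d (List.mem_cons_of_mem _ hd)) ▸ hd)
    rw [this]

theorem pair_list {α : Type*} {P : List α} {x y : α} (hnd : P.Nodup) (hx : x ∈ P)
    (hy : y ∈ P) (hxy : x ≠ y) (hall : ∀ z ∈ P, z = x ∨ z = y) :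
    P = [x, y] ∨ P = [y, x] := by
  cases P with
  | nil => cases hx
  | cons a Q =>
    rw [List.nodup_cons] at hnd
    rcases hall a (List.mem_cons_self) with rfl | rfl
    · left
      have hyQ : y ∈ Q := by
        rcases List.mem_cons.1 hy with h | h
        · exact absurd h.symm hxy
        · exact h
      have : Q = [] ∨ Q = [y] := all_eq_singleton hnd.2 (fun z hz => by
        rcases hall z (List.mem_cons_of_mem _ hz) with rfl | rfl
        · exact absurd hz hnd.1
        · rfl)
      rcases this with rfl | rfl
      · cases hyQ
      · rfl
    · right
      have hxQ : x ∈ Q := by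
        rcases List.mem_cons.1 hx with h | h
        · exact absurd h hxy
        · exact h
      have : Q = [] ∨ Q = [x] := all_eq_singleton hnd.2 (fun z hz => by
        rcases hall z (List.mem_cons_of_mem _ hz) with rfl | rfl
        · rfl
        · exact absurd hz hnd.1)
      rcases this with rfl | rfl
      · cases hxQ
      · rfl

section Graph

variable {V : Type*} [DecidableEq V] {G : SimpleGraph V}

theorem all_mem_of_rep (hconn : G.Connected) {u X v : List V} (hX : X ≠ [])
    (hrep : Represents G (u ++ (X ++ (X ++ v)))) : ∀ a : V, a ∈ X := by
  have hcut : ∀ {a b : V}, G.Adj a b → a ∈ X → b ∈ X := by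
    intro a b hadj ha
    by_contra hb
    have hne : a ≠ b := hadj.ne
    have halt : Alternates a b (u ++ (X ++ (X ++ v))) := (hrep.2 a b hne).2 hadj
    unfold Alternates at halt
    rw [List.filter_append, List.filter_append, List.filter_append] at halt
    set F := X.filter (fun z => decide (z = a ∨ z = b)) with hF
    have hFa : ∀ z ∈ F, z = a := by
      intro z hz
      rw [hF, List.mem_filter, decide_eq_true_eq] at hz
      rcases hz.2 with rfl | rfl
      · rfl
      · exact absurd hz.1 hb
    have haF : a ∈ F := List.mem_filter.2 ⟨ha, by simp⟩
    have hFne : F ≠ [] := fun h => by rw [h] at haF; cases haF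
    rw [List.Chain', List.isChain_append] at halt
    have h2 := halt.2.1
    rw [List.isChain_append] at h2
    have hj := h2.2.2
    have hlast : F.getLast? = some a := by
      rw [List.getLast?_eq_getLast (l := F) hFne]
      exact congrArg some (hFa _ (List.getLast_mem _))
    have hhd : (F ++ v.filter (fun z => decide (z = a ∨ z = b))).head? = some a := by
      apply Chains.head?_append_of_ne_nil
      rw [List.head?_eq_head hFne]
      exact congrArg some (hFa _ (List.head_mem _))
    exact hj a hlast a hhd rfl
  obtain ⟨a₀, ha₀⟩ := List.exists_mem_of_ne_nil X hX
  intro b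
  obtain ⟨p⟩ := hconn.preconnected a₀ b
  clear hrep
  have key : ∀ {s t : V}, G.Walk s t → s ∈ X → t ∈ X := by
    intro s t p
    induction p with
    | nil => exact id
    | cons h q ih => exact fun hs => ih (hcut h hs)
  exact key p ha₀

theorem rep_dedup {u X v : List V} (hall : ∀ a : V, a ∈ X)
    (hrep : Represents G (u ++ (X ++ (X ++ v)))) :
    Represents G (u ++ (X ++ (dedupFirst X ++ v))) := by
  obtain ⟨hmem, hiff⟩ := hrep
  constructor
  · intro a
    exact List.mem_append.2 (Or.inr (List.mem_append.2 (Or.inl (hall a))))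
  · intro x y hxy
    rw [← hiff x y hxy]
    unfold Alternates
    simp only [List.filter_append]
    rw [filter_dedupFirst]
    set F := X.filter (fun z => decide (z = x ∨ z = y)) with hFdef
    have hxF : x ∈ F := List.mem_filter.2 ⟨hall x, by simp⟩
    have hyF : y ∈ F := List.mem_filter.2 ⟨hall y, by simp⟩
    have hallF : ∀ z ∈ F, z = x ∨ z = y := by
      intro z hz
      rw [hFdef, List.mem_filter, decide_eq_true_eq] at hz
      exact hz.2
    have hP : dedupFirst F = [x, y] ∨ dedupFirst F = [y, x] :=
      pair_list (nodup_dedupFirst F) ((mem_dedupFirst F x).2 hxF)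
        ((mem_dedupFirst F y).2 hyF) hxy
        (fun z hz => hallF z ((mem_dedupFirst F z).1 hz))
    have hh : F.head? = (dedupFirst F).head? := (head?_dedupFirst F).symm
    rcases hP with hP | hP
    · rw [hP]
      have hhead : F.head? = some x := by rw [hh, hP]; rfl
      exact (Chains.chain_sq_iff _ _ F x y hxy hallF hhead).symm
    · rw [hP]
      have hhead : F.head? = some y := by rw [hh, hP]; rfl
      exact (Chains.chain_sq_iff _ _ F y x hxy.symm
        (fun z hz => (hallF z hz).symm) hhead).symm

theorem rep_drop {u X v : List V} (hall : ∀ a : V, a ∈ X) (hnd : X.Nodup)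
    (hrep : Represents G (u ++ (X ++ (X ++ v)))) :
    Represents G (u ++ (X ++ v)) := by
  obtain ⟨hmem, hiff⟩ := hrep
  constructor
  · intro a
    exact List.mem_append.2 (Or.inr (List.mem_append.2 (Or.inl (hall a))))
  · intro x y hxy
    rw [← hiff x y hxy]
    unfold Alternates
    simp only [List.filter_append]
    set F := X.filter (fun z => decide (z = x ∨ z = y)) with hFdef
    have hxF : x ∈ F := List.mem_filter.2 ⟨hall x, by simp⟩
    have hyF : y ∈ F := List.mem_filter.2 ⟨hall y, by simp⟩
    have hallF : ∀ z ∈ F, z = x ∨ z = y := by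
      intro z hz
      rw [hFdef, List.mem_filter, decide_eq_true_eq] at hz
      exact hz.2
    have hP : F = [x, y] ∨ F = [y, x] :=
      pair_list (hnd.filter _) hxF hyF hxy hallF
    rcases hP with hP | hP <;> rw [hP] <;> exact (Chains.chain_pair_sq _ _ _ _).symm

end Graph
end SqfAux

theorem connected_has_squarefree_representation {V : Type*} [DecidableEq V] [Fintype V]
    [Nonempty V] (G : SimpleGraph V) (hconn : G.Connected)
    (hwr : ∃ w : List V, Represents G w) :
    ∃ w : List V, SqFree w ∧ Represents G w := by
  obtain ⟨w0, hw0⟩ := hwr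
  suffices H : ∀ n (w : List V), w.length ≤ n → Represents G w →
      ∃ w' : List V, SqFree w' ∧ Represents G w' from H w0.length w0 le_rfl hw0
  intro n
  induction n with
  | zero =>
    intro w hlen hrep
    obtain rfl : w = [] := List.eq_nil_of_length_eq_zero (Nat.le_zero.mp hlen)
    exact absurd (hrep.1 (Classical.arbitrary V)) (by simp)
  | succ n ih =>
    intro w hlen hrep
    by_cases hsf : SqFree w
    · exact ⟨w, hsf, hrep⟩
    · rw [SqFree, not_not] at hsf
      obtain ⟨u, X, v, hX, rfl⟩ := hsf
      have hassoc : u ++ X ++ X ++ v = u ++ (X ++ (X ++ v)) := by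
        simp [List.append_assoc]
      rw [hassoc] at hrep hlen
      have hall := SqfAux.all_mem_of_rep hconn hX hrep
      have hX1 : 1 ≤ X.length := List.length_pos_iff.2 hX
      simp only [List.length_append] at hlen
      by_cases hnd : X.Nodup
      · refine ih (u ++ (X ++ v)) ?_ (SqfAux.rep_drop hall hnd hrep)
        simp only [List.length_append]
        omega
      · refine ih (u ++ (X ++ (SqfAux.dedupFirst X ++ v))) ?_ (SqfAux.rep_dedup hall hrep)
        have hlt := SqfAux.length_dedupFirst_lt X hnd
        simp only [List.length_append]
        omega
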